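/- For every n ≥ 0 there is an equivalence of categories Φ_n : Δ^surj_{[n]/} ≃ (Δ^inj_{+, /[n-1]})^op, between the category of surjective order-preserving maps out of [n] in the simplex category (the coslice of Δ^surj under [n]) and the opposite of the category of injective maps into [n-1] in the augmented simplex category (the slice of Δ₊^inj over [n-1]). -/

import Mathlib

open CategoryTheory

/-- The coslice category `Δ^surj_{[n]/}`: objects are surjective order-preserving maps
`[n] ↠ [k]`, morphisms are surjective order-preserving maps under `[n]`. -/
def SurjUnder (n : ℕ) :=
  Σ k : ℕ, {f : Fin (n + 1) →o Fin (k + 1) // Function.Surjective f}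

instance (n : ℕ) : Category (SurjUnder n) where
  Hom X Y := {h : Fin (X.1 + 1) →o Fin (Y.1 + 1) //
    Function.Surjective h ∧ ∀ i, h (X.2.1 i) = Y.2.1 i}
  id X := ⟨OrderHom.id, Function.surjective_id, fun _ => rfl⟩
  comp {X Y Z} f g := ⟨g.1.comp f.1, by exact g.2.1.comp f.2.1, fun i => by
    show g.1 (f.1 (X.2.1 i)) = Z.2.1 i
    rw [f.2.2 i, g.2.2 i]⟩
  id_comp := by intros; apply Subtype.ext; rfl
  comp_id := by intros; apply Subtype.ext; rfl
  assoc := by intros; apply Subtype.ext; rfl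

/-- The slice category `Δ^inj_{+,/[n-1]}`: objects are injective order-preserving maps
`[k-1] ↪ [n-1]` in the augmented simplex category (an object of `Δ₊` with `k` elements is
modelled by `Fin k`), morphisms are injective order-preserving maps over `[n-1]`. -/
def InjOver (n : ℕ) :=
  Σ k : ℕ, {f : Fin k →o Fin n // Function.Injective f}

instance (n : ℕ) : Category (InjOver n) where
  Hom X Y := {h : Fin X.1 →o Fin Y.1 //
    Function.Injective h ∧ ∀ i, Y.2.1 (h i) = X.2.1 i}
  id X := ⟨OrderHom.id, fun _ _ hh => hh, fun _ => rfl⟩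
  comp {X Y Z} f g := ⟨g.1.comp f.1, by exact g.2.1.comp f.2.1, fun i => by
    show Z.2.1 (g.1 (f.1 i)) = X.2.1 i
    rw [g.2.2 (f.1 i), f.2.2 i]⟩
  id_comp := by intros; apply Subtype.ext; rfl
  comp_id := by intros; apply Subtype.ext; rfl
  assoc := by intros; apply Subtype.ext; rfl

lemma card_filter_val_lt (k m : ℕ) (hm : m ≤ k) :
    ((Finset.univ : Finset (Fin k)).filter (fun i : Fin k => (i : ℕ) < m)).card = m := by
  apply Finset.card_eq_of_bijective (fun i h => (⟨i, lt_of_lt_of_le h hm⟩ : Fin k))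
  · intro a ha
    simp only [Finset.mem_filter] at ha
    exact ⟨a, ha.2, rfl⟩
  · intro i h; simp [h]
  · intro i j hi hj hij
    exact congrArg Fin.val hij

variable {n k : ℕ}

noncomputable def vmax (f : Fin (n+1) →o Fin (k+1)) (hf : Function.Surjective f)
    (j : Fin (k+1)) : Fin (n+1) :=
  (Finset.univ.filter (fun i => f i = j)).max' ⟨(hf j).choose, by
    simp [Finset.mem_filter, (hf j).choose_spec]⟩

lemma f_vmax (f : Fin (n+1) →o Fin (k+1)) (hf : Function.Surjective f) (j : Fin (k+1)) :
    f (vmax f hf j) = j := by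
  have := (Finset.univ.filter (fun i => f i = j)).max'_mem ⟨(hf j).choose, by
    simp [Finset.mem_filter, (hf j).choose_spec]⟩
  exact (Finset.mem_filter.mp this).2

lemma le_vmax (f : Fin (n+1) →o Fin (k+1)) (hf : Function.Surjective f) {j : Fin (k+1)}
    {i : Fin (n+1)} (h : f i = j) : i ≤ vmax f hf j :=
  Finset.le_max' _ _ (by simp [Finset.mem_filter, h])

lemma vmax_lt_iff (f : Fin (n+1) →o Fin (k+1)) (hf : Function.Surjective f)
    {j : Fin (k+1)} {i : Fin (n+1)} : vmax f hf j < i ↔ j < f i := by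
  constructor
  · intro h
    rcases lt_trichotomy j (f i) with h' | h' | h'
    · exact h'
    · exact absurd (le_vmax f hf h'.symm) (not_le.mpr h)
    · exact absurd (f.monotone h.le) (not_le.mpr (by rw [f_vmax]; exact h'))
  · intro h
    by_contra hc
    push_neg at hc
    have := f.monotone hc
    rw [f_vmax] at this
    exact absurd h (not_lt.mpr this)

lemma f_last (f : Fin (n+1) →o Fin (k+1)) (hf : Function.Surjective f) :
    f (Fin.last n) = Fin.last k := by
  obtain ⟨i, hi⟩ := hf (Fin.last k)
  exact le_antisymm (Fin.le_last _) (hi ▸ f.monotone (Fin.le_last i))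

lemma vmax_lt_last (f : Fin (n+1) →o Fin (k+1)) (hf : Function.Surjective f) (j : Fin k) :
    (vmax f hf j.castSucc : ℕ) < n := by
  have hne : vmax f hf j.castSucc ≠ Fin.last n := by
    intro h
    have := f_vmax f hf j.castSucc
    rw [h, f_last f hf] at this
    exact (Fin.castSucc_lt_last j).ne' this
  exact Fin.val_lt_last hne

/-- The "jump" injection associated to a surjection: `j ↦` the largest preimage of `j`. -/
noncomputable def gphi (f : Fin (n+1) →o Fin (k+1)) (hf : Function.Surjective f) :
    Fin k →o Fin n where
  toFun j := ⟨(vmax f hf j.castSucc : ℕ), vmax_lt_last f hf j⟩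
  monotone' := by
    intro j j' h
    rcases eq_or_lt_of_le h with rfl | h
    · exact le_refl _
    · have : vmax f hf j.castSucc < vmax f hf j'.castSucc := by
        rw [vmax_lt_iff, f_vmax]
        exact Fin.castSucc_lt_castSucc_iff.mpr h
      exact le_of_lt this

lemma gphi_strictMono (f : Fin (n+1) →o Fin (k+1)) (hf : Function.Surjective f) :
    StrictMono (gphi f hf) := by
  intro j j' h
  show (vmax f hf j.castSucc : ℕ) < (vmax f hf j'.castSucc : ℕ)
  have : vmax f hf j.castSucc < vmax f hf j'.castSucc := by
    rw [vmax_lt_iff, f_vmax]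
    exact Fin.castSucc_lt_castSucc_iff.mpr h
  exact this

/-- The counting surjection associated to an injection. -/
def fcount (g : Fin k →o Fin n) : Fin (n+1) →o Fin (k+1) where
  toFun j := ⟨(Finset.univ.filter (fun i : Fin k => (g i : ℕ) < (j : ℕ))).card, by
    have := Finset.card_filter_le (Finset.univ : Finset (Fin k))
      (fun i : Fin k => (g i : ℕ) < (j : ℕ))
    simpa using Nat.lt_succ_of_le (le_trans this (by simp))⟩
  monotone' := by
    intro j j' h
    show (Finset.univ.filter (fun i : Fin k => (g i : ℕ) < (j : ℕ))).card ≤ (Finset.univ.filter (fun i : Fin k => (g i : ℕ) < (j' : ℕ))).card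
    apply Finset.card_le_card
    intro i hi
    simp only [Finset.mem_filter, Finset.mem_univ, true_and] at hi ⊢
    exact lt_of_lt_of_le hi h

lemma fcount_at {g : Fin k →o Fin n} (hg : StrictMono g) (m : Fin k) :
    fcount g (g m).castSucc = m.castSucc := by
  apply Fin.ext
  show (Finset.univ.filter (fun i : Fin k => (g i : ℕ) < ((g m).castSucc : ℕ))).card = (m : ℕ)
  have : Finset.univ.filter (fun i : Fin k => (g i : ℕ) < ((g m).castSucc : ℕ))
      = Finset.univ.filter (fun i : Fin k => (i : ℕ) < (m : ℕ)) := by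
    apply Finset.filter_congr
    intro i _
    simp only [Fin.coe_castSucc]
    rw [← Fin.lt_iff_val_lt_val, ← Fin.lt_iff_val_lt_val, hg.lt_iff_lt]
  rw [this]
  exact card_filter_val_lt k m (le_of_lt m.isLt)

lemma fcount_succ {g : Fin k →o Fin n} (hg : StrictMono g) (m : Fin k) :
    fcount g (g m).succ = m.succ := by
  apply Fin.ext
  show (Finset.univ.filter (fun i : Fin k => (g i : ℕ) < ((g m).succ : ℕ))).card = (m : ℕ) + 1
  have : Finset.univ.filter (fun i : Fin k => (g i : ℕ) < ((g m).succ : ℕ))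
      = Finset.univ.filter (fun i : Fin k => (i : ℕ) < (m : ℕ) + 1) := by
    apply Finset.filter_congr
    intro i _
    simp only [Fin.val_succ, Nat.lt_succ_iff]
    rw [← Fin.le_iff_val_le_val, ← Fin.le_iff_val_le_val, hg.le_iff_le]
  rw [this]
  exact card_filter_val_lt k (m + 1) m.isLt

lemma fcount_last (g : Fin k →o Fin n) : fcount g (Fin.last n) = Fin.last k := by
  apply Fin.ext
  show (Finset.univ.filter (fun i : Fin k => (g i : ℕ) < n)).card = k
  have : (Finset.univ.filter (fun i : Fin k => (g i : ℕ) < n)) = Finset.univ := by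
    apply Finset.filter_true_of_mem
    intro i _
    exact (g i).isLt
  rw [this, Finset.card_univ, Fintype.card_fin]

lemma fcount_surj {g : Fin k →o Fin n} (hg : Function.Injective g) :
    Function.Surjective (fcount g) := by
  have hsm : StrictMono g := g.monotone.strictMono_of_injective hg
  intro m
  rcases eq_or_lt_of_le (Fin.le_last m) with rfl | h
  · exact ⟨Fin.last n, fcount_last g⟩
  · have hm : (m : ℕ) < k := h
    refine ⟨(g ⟨m, hm⟩).castSucc, ?_⟩
    rw [fcount_at hsm]
    exact Fin.ext rfl

lemma fcount_gphi (f : Fin (n+1) →o Fin (k+1)) (hf : Function.Surjective f) :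
    fcount (gphi f hf) = f := by
  apply OrderHom.ext
  funext j
  apply Fin.ext
  show (Finset.univ.filter (fun i : Fin k => (gphi f hf i : ℕ) < (j : ℕ))).card = (f j : ℕ)
  have : Finset.univ.filter (fun i : Fin k => (gphi f hf i : ℕ) < (j : ℕ))
      = Finset.univ.filter (fun i : Fin k => (i : ℕ) < (f j : ℕ)) := by
    apply Finset.filter_congr
    intro i _
    show ((vmax f hf i.castSucc : ℕ) < (j : ℕ)) ↔ _
    rw [← Fin.lt_iff_val_lt_val, vmax_lt_iff]
    constructor
    · intro h; exact h
    · intro h; exact h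
  rw [this]
  exact card_filter_val_lt k (f j : ℕ) (Fin.is_le _)

lemma gphi_fcount (g : Fin k →o Fin n) (hg : Function.Injective g) :
    gphi (fcount g) (fcount_surj hg) = g := by
  have hsm : StrictMono g := g.monotone.strictMono_of_injective hg
  apply OrderHom.ext
  funext i
  apply Fin.ext
  show (vmax (fcount g) (fcount_surj hg) i.castSucc : ℕ) = (g i : ℕ)
  have h1 : (g i).castSucc ≤ vmax (fcount g) (fcount_surj hg) i.castSucc :=
    le_vmax _ _ (fcount_at hsm i)
  have h2 : vmax (fcount g) (fcount_surj hg) i.castSucc ≤ (g i).castSucc := by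
    by_contra hc
    push_neg at hc
    have hsucc : (g i).succ ≤ vmax (fcount g) (fcount_surj hg) i.castSucc := hc
    have := (fcount g).monotone hsucc
    rw [f_vmax, fcount_succ hsm] at this
    exact absurd this (not_le.mpr Fin.castSucc_lt_succ)
  have := le_antisymm h2 h1
  exact congrArg Fin.val this

lemma mem_range_gphi (f : Fin (n+1) →o Fin (k+1)) (hf : Function.Surjective f) (i : Fin n) :
    (∃ j, gphi f hf j = i) ↔ f i.castSucc < f i.succ := by
  constructor
  · rintro ⟨j, hj⟩
    have hv : vmax f hf j.castSucc = i.castSucc := by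
      apply Fin.ext
      show (vmax f hf j.castSucc : ℕ) = (i : ℕ)
      exact congrArg Fin.val hj
    have h1 : f i.castSucc = j.castSucc := by rw [← hv, f_vmax]
    have h2 : vmax f hf j.castSucc < i.succ := by
      rw [hv]; exact Fin.castSucc_lt_succ
    rw [vmax_lt_iff] at h2
    rw [h1]; exact h2
  · intro h
    have hne : (f i.castSucc : ℕ) < k := by
      have : f i.castSucc < Fin.last k := lt_of_lt_of_le h (Fin.le_last _)
      exact this
    refine ⟨⟨(f i.castSucc : ℕ), hne⟩, ?_⟩
    have hcs : (⟨(f i.castSucc : ℕ), hne⟩ : Fin k).castSucc = f i.castSucc := Fin.ext rfl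
    have h1 : i.castSucc ≤ vmax f hf (⟨(f i.castSucc : ℕ), hne⟩ : Fin k).castSucc :=
      le_vmax f hf (by rw [hcs])
    have h2 : vmax f hf (⟨(f i.castSucc : ℕ), hne⟩ : Fin k).castSucc ≤ i.castSucc := by
      by_contra hc
      push_neg at hc
      have hsucc : i.succ ≤ vmax f hf _ := hc
      have := f.monotone hsucc
      rw [f_vmax, hcs] at this
      exact absurd h (not_lt.mpr this)
    apply Fin.ext
    show (vmax f hf _ : ℕ) = (i : ℕ)
    have := le_antisymm h2 h1
    exact congrArg Fin.val this

lemma fcount_ker {k k' : ℕ} (A : Fin k →o Fin n) (B : Fin k' →o Fin n)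
    (hsub : ∀ t, ∃ s, A s = B t) {i j : Fin (n+1)}
    (hij : fcount A i = fcount A j) : fcount B i = fcount B j := by
  wlog h : i ≤ j generalizing i j
  · exact (this hij.symm (le_of_not_ge h)).symm
  have hAsub : Finset.univ.filter (fun s : Fin k => (A s : ℕ) < (i : ℕ))
      ⊆ Finset.univ.filter (fun s : Fin k => (A s : ℕ) < (j : ℕ)) := by
    intro s hs
    simp only [Finset.mem_filter, Finset.mem_univ, true_and] at hs ⊢
    exact lt_of_lt_of_le hs h
  have hcard : (Finset.univ.filter (fun s : Fin k => (A s : ℕ) < (i : ℕ))).card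
      = (Finset.univ.filter (fun s : Fin k => (A s : ℕ) < (j : ℕ))).card :=
    congrArg Fin.val hij
  have hAeq := Finset.eq_of_subset_of_card_le hAsub (le_of_eq hcard.symm)
  apply Fin.ext
  show (Finset.univ.filter (fun t : Fin k' => (B t : ℕ) < (i : ℕ))).card
      = (Finset.univ.filter (fun t : Fin k' => (B t : ℕ) < (j : ℕ))).card
  congr 1
  apply Finset.Subset.antisymm
  · intro t ht
    simp only [Finset.mem_filter, Finset.mem_univ, true_and] at ht ⊢
    exact lt_of_lt_of_le ht h
  · intro t ht
    simp only [Finset.mem_filter, Finset.mem_univ, true_and] at ht ⊢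
    obtain ⟨s, hs⟩ := hsub t
    have : s ∈ Finset.univ.filter (fun s : Fin k => (A s : ℕ) < (j : ℕ)) := by
      simp only [Finset.mem_filter, Finset.mem_univ, true_and, hs]
      exact ht
    rw [← hAeq] at this
    simp only [Finset.mem_filter, Finset.mem_univ, true_and, hs] at this
    exact this

instance surjThin {n : ℕ} (X Y : SurjUnder n) : Subsingleton (X ⟶ Y) := ⟨by
  intro a b
  apply Subtype.ext
  apply OrderHom.ext
  funext z
  obtain ⟨i, rfl⟩ := X.2.2 z
  rw [a.2.2 i, b.2.2 i]⟩

instance injThin {n : ℕ} (A B : InjOver n) : Subsingleton (A ⟶ B) := ⟨by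
  intro a b
  apply Subtype.ext
  apply OrderHom.ext
  funext i
  apply B.2.2
  rw [a.2.2 i, b.2.2 i]⟩

instance injOpThin {n : ℕ} (X Y : (InjOver n)ᵒᵖ) : Subsingleton (X ⟶ Y) :=
  ⟨fun a b => Quiver.Hom.unop_inj (Subsingleton.elim _ _)⟩

noncomputable def surjHom {n : ℕ} (X Y : SurjUnder n)
    (hker : ∀ i j, X.2.1 i = X.2.1 j → Y.2.1 i = Y.2.1 j) : X ⟶ Y :=
  ⟨{ toFun := fun z => Y.2.1 (X.2.2 z).choose
     monotone' := by
       intro z z' hz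
       rcases eq_or_lt_of_le hz with rfl | hlt
       · exact le_refl _
       · apply Y.2.1.monotone
         by_contra hc
         push_neg at hc
         have := X.2.1.monotone hc.le
         rw [(X.2.2 z).choose_spec, (X.2.2 z').choose_spec] at this
         exact absurd hlt (not_lt.mpr this) },
   fun w => by
     obtain ⟨i, hi⟩ := Y.2.2 w
     exact ⟨X.2.1 i, by
       show Y.2.1 _ = w
       rw [hker _ i (X.2.2 (X.2.1 i)).choose_spec, hi]⟩,
   fun i => by
     show Y.2.1 _ = Y.2.1 i
     exact hker _ i (X.2.2 (X.2.1 i)).choose_spec⟩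

noncomputable def injHom {n : ℕ} (A B : InjOver n)
    (hsub : ∀ i, ∃ j, B.2.1 j = A.2.1 i) : A ⟶ B :=
  ⟨{ toFun := fun i => (hsub i).choose
     monotone' := by
       intro i i' h
       rw [← (B.2.1.monotone.strictMono_of_injective B.2.2).le_iff_le]
       show B.2.1 _ ≤ B.2.1 _
       rw [(hsub i).choose_spec, (hsub i').choose_spec]
       exact A.2.1.monotone h },
   fun i i' h => by
     apply A.2.2
     rw [← (hsub i).choose_spec, ← (hsub i').choose_spec]
     exact congrArg B.2.1 h,
   fun i => (hsub i).choose_spec⟩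

noncomputable def Fobj {n : ℕ} (X : SurjUnder n) : InjOver n :=
  ⟨X.1, gphi X.2.1 X.2.2, (gphi_strictMono X.2.1 X.2.2).injective⟩

noncomputable def Gobj {n : ℕ} (A : InjOver n) : SurjUnder n :=
  ⟨A.1, fcount A.2.1, fcount_surj A.2.2⟩

lemma Gobj_Fobj {n : ℕ} (X : SurjUnder n) : Gobj (Fobj X) = X := by
  obtain ⟨k, f, hf⟩ := X
  exact congrArg (fun t => (⟨k, t⟩ : SurjUnder n)) (Subtype.ext (fcount_gphi f hf))

lemma Fobj_Gobj {n : ℕ} (A : InjOver n) : Fobj (Gobj A) = A := by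
  obtain ⟨k, g, hg⟩ := A
  exact congrArg (fun t => (⟨k, t⟩ : InjOver n)) (Subtype.ext (gphi_fcount g hg))

noncomputable def Ffun (n : ℕ) : SurjUnder n ⥤ (InjOver n)ᵒᵖ where
  obj X := Opposite.op (Fobj X)
  map {X Y} φ := (injHom (Fobj Y) (Fobj X) (by
    intro i
    apply (mem_range_gphi X.2.1 X.2.2 (gphi Y.2.1 Y.2.2 i)).mpr
    have hY := (mem_range_gphi Y.2.1 Y.2.2 (gphi Y.2.1 Y.2.2 i)).mp ⟨i, rfl⟩
    set t := gphi Y.2.1 Y.2.2 i with ht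
    rcases eq_or_lt_of_le (X.2.1.monotone (Fin.castSucc_le_succ t)) with he | h
    · exfalso
      have : Y.2.1 t.castSucc = Y.2.1 t.succ := by
        rw [← φ.2.2 t.castSucc, ← φ.2.2 t.succ, he]
      exact hY.ne this
    · exact h)).op
  map_id := fun X => Quiver.Hom.unop_inj (Subsingleton.elim _ _)
  map_comp := fun f g => Quiver.Hom.unop_inj (Subsingleton.elim _ _)

noncomputable def Gfun (n : ℕ) : (InjOver n)ᵒᵖ ⥤ SurjUnder n where
  obj A := Gobj A.unop
  map {A B} ψ := surjHom (Gobj A.unop) (Gobj B.unop) (fun i j hij =>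
    fcount_ker A.unop.2.1 B.unop.2.1 (fun t => ⟨ψ.unop.1 t, ψ.unop.2.2 t⟩) hij)
  map_id := fun X => Subsingleton.elim _ _
  map_comp := fun f g => Subsingleton.elim _ _


/-- For every `n ≥ 0`, interval duality induces an equivalence of
categories `Φₙ : Δ^surj_{[n]/} ≃ (Δ^inj_{+,/[n-1]})ᵒᵖ` between the coslice of `Δ^surj`
under `[n]` and the opposite of the slice of `Δ₊^inj` over `[n-1]`. -/
theorem stmt_10 (n : ℕ) : Nonempty (SurjUnder n ≌ (InjOver n)ᵒᵖ) := by
  refine ⟨CategoryTheory.Equivalence.mk (Ffun n) (Gfun n) ?_ ?_⟩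
  · exact NatIso.ofComponents (fun X => eqToIso (Gobj_Fobj X).symm)
      (fun _ => Subsingleton.elim _ _)
  · exact NatIso.ofComponents
      (fun A => eqToIso ((congrArg Opposite.op (Fobj_Gobj A.unop)).trans (Opposite.op_unop A)))
      (fun _ => Subsingleton.elim _ _)
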